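/- Let X be a normal Cayley graph on a finite group G (its connection set is closed under conjugation). If α(X)·ω(X) = |G|, then χ(X) = ω(X). -/

import Mathlib

/-- The Cayley graph of a group `G` with connection set `D` (symmetric and not
containing the identity): `a ∼ b` iff `b * a⁻¹ ∈ D`. -/
def cayleyGraph {G : Type*} [Group G] (D : Set G)
    (hsym : ∀ g ∈ D, g⁻¹ ∈ D) (hid : (1 : G) ∉ D) : SimpleGraph G where
  Adj a b := b * a⁻¹ ∈ D
  symm := by
    refine ⟨fun a b h => ?_⟩
    simpa [mul_inv_rev] using hsym _ h
  loopless := by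
    refine ⟨fun a h => ?_⟩
    simp only [mul_inv_cancel] at h
    exact hid h

/-- The independence number of a finite graph. -/
noncomputable def indepNum {V : Type*} [Fintype V] (X : SimpleGraph V) : ℕ :=
  sSup {k | ∃ S : Finset V, S.card = k ∧ ∀ x ∈ S, ∀ y ∈ S, ¬ X.Adj x y}

open Finset in

lemma counting_lemma {G : Type*} [Group G] [Fintype G] [DecidableEq G] {D : Set G}
    (C T : Finset G)
    (hCcl : ∀ a ∈ C, ∀ b ∈ C, a ≠ b → b * a⁻¹ ∈ D)
    (hTind : ∀ a ∈ T, ∀ b ∈ T, b * a⁻¹ ∈ D → False)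
    (hcard : T.card * C.card = Fintype.card G) :
    ∀ v : G, ∃! c, c ∈ C ∧ c * v⁻¹ ∈ T := by
  classical
  set f : G → ℕ := fun g => (C.filter (fun c => c * g⁻¹ ∈ T)).card with hf
  have hle : ∀ g, f g ≤ 1 := by
    intro g
    rw [Finset.card_le_one]
    intro a ha b hb
    simp only [mem_filter] at ha hb
    by_contra hne
    have hD : b * a⁻¹ ∈ D := hCcl a ha.1 b hb.1 hne
    have : (b * g⁻¹) * (a * g⁻¹)⁻¹ ∈ D := by
      have : (b * g⁻¹) * (a * g⁻¹)⁻¹ = b * a⁻¹ := by group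
      rw [this]; exact hD
    exact hTind _ ha.2 _ hb.2 this
  have hsum : ∑ g : G, f g = Fintype.card G := by
    have : ∑ g : G, f g = ∑ c ∈ C, ∑ g : G, (if c * g⁻¹ ∈ T then 1 else 0) := by
      simp only [hf, Finset.card_filter]
      rw [Finset.sum_comm]
    rw [this]
    have hinner : ∀ c : G, ∑ g : G, (if c * g⁻¹ ∈ T then 1 else 0) = T.card := by
      intro c
      rw [← Finset.card_filter]
      have : Finset.univ.filter (fun g => c * g⁻¹ ∈ T) = T.image (fun t => t⁻¹ * c) := by
        ext g
        simp only [mem_filter, mem_univ, true_and, mem_image]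
        constructor
        · intro hg; exact ⟨c * g⁻¹, hg, by group⟩
        · rintro ⟨t, ht, rfl⟩; simpa using ht
      rw [this, Finset.card_image_of_injective _ (fun a b hab => by
        simpa using mul_right_cancel hab)]
    simp only [hinner, Finset.sum_const, smul_eq_mul, card_univ]
    rw [mul_comm, hcard]
  have hone : ∀ v : G, f v = 1 := by
    by_contra hcon
    push_neg at hcon
    obtain ⟨v, hv⟩ := hcon
    have hv0 : f v = 0 := by have := hle v; omega
    have : ∑ g : G, f g < ∑ _g : G, 1 :=
      Finset.sum_lt_sum (fun i _ => hle i) ⟨v, Finset.mem_univ v, by omega⟩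
    simp only [Finset.sum_const, smul_eq_mul, mul_one, card_univ, hsum] at this
    omega
  intro v
  obtain ⟨c, hc⟩ := Finset.card_eq_one.mp (hone v)
  have hcmem : c ∈ C.filter (fun x => x * v⁻¹ ∈ T) := hc ▸ Finset.mem_singleton_self c
  simp only [mem_filter] at hcmem
  refine ⟨c, hcmem, ?_⟩
  intro y hy
  have : y ∈ C.filter (fun x => x * v⁻¹ ∈ T) := Finset.mem_filter.mpr hy
  rw [hc] at this
  exact Finset.mem_singleton.mp this

/-- For a normal Cayley graph (connection set closed under conjugation),
if `α(X)·ω(X) = |G|` then `χ(X) = ω(X)`. -/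
theorem normal_cayley_chromatic {G : Type*} [Group G] [Fintype G] [DecidableEq G]
    (D : Set G) (hsym : ∀ g ∈ D, g⁻¹ ∈ D) (hid : (1 : G) ∉ D)
    (hconj : ∀ g : G, ∀ d ∈ D, g * d * g⁻¹ ∈ D)
    (h : indepNum (cayleyGraph D hsym hid) * (cayleyGraph D hsym hid).cliqueNum =
      Fintype.card G) :
    (cayleyGraph D hsym hid).chromaticNumber =
      ((cayleyGraph D hsym hid).cliqueNum : ℕ∞) := by
  classical
  set X := cayleyGraph D hsym hid with hX
  -- maximum clique
  obtain ⟨C, hC⟩ := X.exists_isNClique_cliqueNum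
  -- maximum independent set
  set K : Set ℕ := {k | ∃ S : Finset G, S.card = k ∧ ∀ x ∈ S, ∀ y ∈ S, ¬ X.Adj x y} with hK
  have hKne : K.Nonempty := ⟨0, ∅, by simp⟩
  have hKbdd : BddAbove K := by
    refine ⟨Fintype.card G, ?_⟩
    rintro k ⟨S, rfl, -⟩
    exact S.card_le_univ.trans_eq (by simp)
  obtain ⟨S, hScard, hSind⟩ : ∃ S : Finset G, S.card = indepNum X ∧
      ∀ x ∈ S, ∀ y ∈ S, ¬ X.Adj x y := Nat.sSup_mem hKne hKbdd
  -- T = S⁻¹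
  set T : Finset G := S.image (·⁻¹) with hT
  have hTcard : T.card = indepNum X := by
    rw [hT, Finset.card_image_of_injective _ inv_injective, hScard]
  have hAdj : ∀ a b : G, X.Adj a b ↔ b * a⁻¹ ∈ D := fun a b => Iff.rfl
  have hTind : ∀ a ∈ T, ∀ b ∈ T, b * a⁻¹ ∈ D → False := by
    intro a ha b hb hab
    simp only [hT, Finset.mem_image] at ha hb
    obtain ⟨s, hs, rfl⟩ := ha
    obtain ⟨t, ht, rfl⟩ := hb
    rw [inv_inv] at hab
    -- t⁻¹ * s ∈ D
    have h1 : s * (t⁻¹ * s) * s⁻¹ ∈ D := hconj s _ hab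
    have h2 : s * t⁻¹ ∈ D := by
      have : s * (t⁻¹ * s) * s⁻¹ = s * t⁻¹ := by group
      rwa [this] at h1
    have h3 : t * s⁻¹ ∈ D := by simpa [mul_inv_rev] using hsym _ h2
    exact hSind s hs t ht ((hAdj s t).mpr h3)
  have hCcl : ∀ a ∈ C, ∀ b ∈ C, a ≠ b → b * a⁻¹ ∈ D :=
    fun a ha b hb hne => (hAdj a b).mp (hC.isClique ha hb hne)
  have hcard : T.card * C.card = Fintype.card G := by
    rw [hTcard, hC.card_eq, h]
  have key := counting_lemma (D := D) C T hCcl hTind hcard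
  -- build the coloring
  let p : G → G → Prop := fun v c => c * v⁻¹ ∈ T
  have keyv : ∀ v : G, ∃! c, c ∈ C ∧ p v c := key
  let col : G → {c // c ∈ C} := fun v =>
    ⟨Finset.choose (p v) C (keyv v), Finset.choose_mem _ _ _⟩
  have colp : ∀ v : G, (col v : G) * v⁻¹ ∈ T := fun v => Finset.choose_property (p v) C (keyv v)
  have hcolor : ∀ v w : G, X.Adj v w → col v ≠ col w := by
    intro v w hvw heq
    have hD : w * v⁻¹ ∈ D := (hAdj v w).mp hvw
    have hD2 : w⁻¹ * (v * w⁻¹) * (w⁻¹)⁻¹ ∈ D := hconj w⁻¹ _ (by simpa [mul_inv_rev] using hsym _ hD)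
    have hD3 : w⁻¹ * v ∈ D := by
      have : w⁻¹ * (v * w⁻¹) * (w⁻¹)⁻¹ = w⁻¹ * v := by group
      rwa [this] at hD2
    set c : G := (col v : G) with hc
    have h1 : c * v⁻¹ ∈ T := colp v
    have h2 : c * w⁻¹ ∈ T := by
      have : (col w : G) = c := by rw [hc, heq]
      rw [← this]; exact colp w
    refine hTind _ h1 _ h2 ?_
    have : (c * w⁻¹) * (c * v⁻¹)⁻¹ = c * (w⁻¹ * v) * c⁻¹ := by group
    rw [this]
    exact hconj c _ hD3
  let coloring : X.Coloring {c // c ∈ C} := SimpleGraph.Coloring.mk col (fun hvw => hcolor _ _ hvw)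
  have hcolorable : X.Colorable X.cliqueNum := by
    have := coloring.colorable
    rwa [Fintype.card_coe, hC.card_eq] at this
  exact le_antisymm hcolorable.chromaticNumber_le
    (by rw [← hC.card_eq]; exact hC.isClique.card_le_chromaticNumber)
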